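/- arXiv:2301.10553 — 8 statements merged into one kernel-verified Lean document; each statement's English description precedes it below -/
import Mathlib

section
/- Let (T, E, F) be a solution of Model (1) on [0,∞) with nonnegative initial values. Then T(t) ≥ 0, E(t) ≥ 0 and F(t) ≥ 0 for all t ≥ 0. -/
/-!
Each equation is linear in its own unknown, `g' = a g + b` with `a` continuous on `[0, ∞)` and
`b ≥ 0`. For such an equation `g · exp (-∫₀ᵗ a)` has derivative `b · exp (-∫₀ᵗ a) ≥ 0`, so it
is nondecreasing and `g` stays nonnegative once `g 0` is. This applies to `F` (with `a = -α T`,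
`b = 0`), then to `E` (with `a = -μ`, `b = r F ≥ 0`), and finally to `T` (with
`a = k₁ E / (a₁ + E) · (1 - m₁ T)`, continuous on `[0, ∞)` because `E ≥ 0`
keeps the denominator positive there).
-/

open Set Real intervalIntegral

theorem nonneg_of_hasDerivAt_eq_mul_add {g a b : ℝ → ℝ} (hgc : ContinuousOn g (Ici 0))
    (hg : ∀ t > 0, HasDerivAt g (a t * g t + b t) t) (ha : ContinuousOn a (Ici 0))
    (hb : ∀ t > 0, 0 ≤ b t) (hg0 : 0 ≤ g 0) {t : ℝ} (ht : 0 ≤ t) : 0 ≤ g t := by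
  set A : ℝ → ℝ := fun s => ∫ u in (0)..s, a u
  have hA : ContinuousOn A (Icc 0 t) := by
    simpa only [uIcc_of_le ht] using continuousOn_primitive_interval
      ((ha.mono Icc_subset_Ici_self).integrableOn_Icc.mono_set (uIcc_of_le ht).subset)
  have hA' : ∀ s > 0, HasDerivAt A (a s) s := fun s hs =>
    integral_hasDerivAt_right ((ha.mono Icc_subset_Ici_self).intervalIntegrable_of_Icc hs.le)
      ((ha.mono Ioi_subset_Ici_self).stronglyMeasurableAtFilter isOpen_Ioi s hs)
      (ha.continuousAt (Ici_mem_nhds hs))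
  have hmono : MonotoneOn (fun s => g s * exp (-A s)) (Icc 0 t) := by
    refine monotoneOn_of_hasDerivWithinAt_nonneg (f' := fun s => b s * exp (-A s))
      (convex_Icc 0 t) ((hgc.mono Icc_subset_Ici_self).mul hA.neg.rexp) ?_ ?_
    · rw [interior_Icc]
      intro s hs
      refine (((hg s hs.1).mul (hA' s hs.1).neg.exp).congr_deriv ?_).hasDerivWithinAt
      simp only [Pi.neg_apply]
      ring
    · rw [interior_Icc]
      exact fun s hs => mul_nonneg (hb s hs.1) (exp_pos _).le
  have hle := hmono ⟨le_rfl, ht⟩ ⟨ht, le_rfl⟩ ht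
  simp only [A, integral_same, neg_zero, exp_zero, mul_one] at hle
  exact nonneg_of_mul_nonneg_left (hg0.trans hle) (exp_pos _)

theorem model1_nonneg_general
    (k1 m1 r μ α a1 : ℝ)
    (hr : 0 ≤ r)
    (ha1 : 0 < a1)
    (T E F : ℝ → ℝ)
    (hT : Differentiable ℝ T) (hE : Differentiable ℝ E) (hF : Differentiable ℝ F)
    (hT' : ∀ t ≥ (0:ℝ), deriv T t = (k1 * E t / (a1 + E t)) * T t * (1 - m1 * T t))
    (hE' : ∀ t ≥ (0:ℝ), deriv E t = r * F t - μ * E t)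
    (hF' : ∀ t ≥ (0:ℝ), deriv F t = -(α * T t * F t))
    (hT0 : 0 ≤ T 0) (hE0 : 0 ≤ E 0) (hF0 : 0 ≤ F 0) :
    ∀ t ≥ (0:ℝ), 0 ≤ T t ∧ 0 ≤ E t ∧ 0 ≤ F t := by
  have hF_nonneg : ∀ t ≥ (0:ℝ), 0 ≤ F t := fun t ht =>
    nonneg_of_hasDerivAt_eq_mul_add (a := fun s => -(α * T s)) (b := 0)
      hF.continuous.continuousOn
      (fun s hs => (hF s).hasDerivAt.congr_deriv <| by
        rw [hF' s hs.le]; simp only [neg_mul, Pi.zero_apply, add_zero])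
      (hT.continuous.const_mul α).neg.continuousOn (fun _ _ => le_rfl) hF0 ht
  have hE_nonneg : ∀ t ≥ (0:ℝ), 0 ≤ E t := fun t ht =>
    nonneg_of_hasDerivAt_eq_mul_add (a := fun _ => -μ) (b := fun s => r * F s)
      hE.continuous.continuousOn
      (fun s hs => (hE s).hasDerivAt.congr_deriv (by rw [hE' s hs.le]; ring))
      continuousOn_const (fun s hs => mul_nonneg hr (hF_nonneg s hs.le)) hE0 ht
  have hrate : ContinuousOn (fun s => k1 * E s / (a1 + E s) * (1 - m1 * T s)) (Ici 0) := by
    have hden : ∀ s ∈ Ici (0:ℝ), a1 + E s ≠ 0 := fun s hs =>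
      (add_pos_of_pos_of_nonneg ha1 (hE_nonneg s hs)).ne'
    have := hT.continuous
    have := hE.continuous
    fun_prop (disch := assumption)
  have hT_nonneg : ∀ t ≥ (0:ℝ), 0 ≤ T t := fun t ht =>
    nonneg_of_hasDerivAt_eq_mul_add (b := 0) hT.continuous.continuousOn
      (fun s hs => (hT s).hasDerivAt.congr_deriv <| by
        rw [hT' s hs.le]; simp only [Pi.zero_apply, add_zero]; ring)
      hrate (fun _ _ => le_rfl) hT0 ht
  exact fun t ht => ⟨hT_nonneg t ht, hE_nonneg t ht, hF_nonneg t ht⟩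

/-- Nonnegativity part of Proposition 1: a solution of Model (1) on [0,∞)
with nonnegative initial values stays nonnegative. -/
theorem model1_nonneg
    (k1 m1 r μ α a1 : ℝ)
    (hk1 : 0 ≤ k1) (hm1 : 0 ≤ m1) (hr : 0 ≤ r) (hμ : 0 ≤ μ) (hα : 0 ≤ α)
    (ha1 : 0 < a1)
    (T E F : ℝ → ℝ)
    (hT : Differentiable ℝ T) (hE : Differentiable ℝ E) (hF : Differentiable ℝ F)
    (hT' : ∀ t ≥ (0:ℝ), deriv T t = (k1 * E t / (a1 + E t)) * T t * (1 - m1 * T t))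
    (hE' : ∀ t ≥ (0:ℝ), deriv E t = r * F t - μ * E t)
    (hF' : ∀ t ≥ (0:ℝ), deriv F t = -(α * T t * F t))
    (hT0 : 0 ≤ T 0) (hE0 : 0 ≤ E 0) (hF0 : 0 ≤ F 0) :
    ∀ t ≥ (0:ℝ), 0 ≤ T t ∧ 0 ≤ E t ∧ 0 ≤ F t :=
  model1_nonneg_general k1 m1 r μ α a1 hr ha1 T E F hT hE hF hT' hE' hF' hT0 hE0 hF0
end

section
/- Let (T, E, F) be a solution of Model (1) on [0,∞) with nonnegative initial values, with m1 > 0, and suppose E(t) ≥ 0 and T(t) ≥ 0 for all t ≥ 0 (which hold by the nonnegativity part of Proposition 1). If T(0) ≤ 1/m1, then T(t) ≤ 1/m1 for all t ≥ 0. -/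
/-- Forward invariance of the region {T ≤ 1/m1} for Model (1) (m1 > 0):
if T(0) ≤ 1/m1 then T(t) ≤ 1/m1 for all t ≥ 0. -/
theorem model1_tumor_bounded
    (k1 m1 r μ α a1 : ℝ)
    (hk1 : 0 ≤ k1) (hm1 : 0 < m1) (hr : 0 ≤ r) (hμ : 0 ≤ μ) (hα : 0 ≤ α)
    (ha1 : 0 < a1)
    (T E F : ℝ → ℝ)
    (hT : Differentiable ℝ T) (hE : Differentiable ℝ E) (hF : Differentiable ℝ F)
    (hT' : ∀ t ≥ (0:ℝ), deriv T t = (k1 * E t / (a1 + E t)) * T t * (1 - m1 * T t))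
    (hE' : ∀ t ≥ (0:ℝ), deriv E t = r * F t - μ * E t)
    (hF' : ∀ t ≥ (0:ℝ), deriv F t = -(α * T t * F t))
    (hT0 : 0 ≤ T 0) (hE0 : 0 ≤ E 0) (hF0 : 0 ≤ F 0)
    (hEnonneg : ∀ t ≥ (0:ℝ), 0 ≤ E t) (hTnonneg : ∀ t ≥ (0:ℝ), 0 ≤ T t)
    (hT0le : T 0 ≤ 1 / m1) :
    ∀ t ≥ (0:ℝ), T t ≤ 1 / m1 := by
  intro t1 ht1
  by_contra hgt
  push_neg at hgt
  set S : Set ℝ := {t | t ∈ Set.Icc (0:ℝ) t1 ∧ T t ≤ 1 / m1} with hS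
  have hSne : S.Nonempty := ⟨0, ⟨le_refl _, ht1⟩, hT0le⟩
  have hSbdd : BddAbove S := ⟨t1, fun x hx => hx.1.2⟩
  have hSclosed : IsClosed S := by
    have : S = Set.Icc (0:ℝ) t1 ∩ T ⁻¹' Set.Iic (1 / m1) := by
      ext x; simp [hS, Set.mem_Icc, and_assoc]
    rw [this]
    exact isClosed_Icc.inter (isClosed_Iic.preimage hT.continuous)
  set s := sSup S with hs
  have hsS : s ∈ S := hSclosed.csSup_mem hSne hSbdd
  have hs0 : 0 ≤ s := hsS.1.1
  have hst1 : s ≤ t1 := hsS.1.2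
  have hsT : T s ≤ 1 / m1 := hsS.2
  have hslt : s < t1 := lt_of_le_of_ne hst1 (fun h => absurd hsT (by rw [h]; exact not_le.2 hgt))
  -- On (s, t1], T > 1/m1
  have hbig : ∀ x, s < x → x ≤ t1 → 1 / m1 < T x := by
    intro x hx hx1
    by_contra hle
    push_neg at hle
    have : x ∈ S := ⟨⟨le_trans hs0 hx.le, hx1⟩, hle⟩
    exact absurd (le_csSup hSbdd this) (not_le.2 hx)
  have hderiv : ∀ x ∈ interior (Set.Icc s t1), deriv T x ≤ 0 := by
    intro x hx
    rw [interior_Icc] at hx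
    obtain ⟨hx1, hx2⟩ := hx
    have hx0 : 0 ≤ x := le_trans hs0 hx1.le
    rw [hT' x hx0]
    have h1 : 0 ≤ k1 * E x / (a1 + E x) := by
      apply div_nonneg (mul_nonneg hk1 (hEnonneg x hx0))
      linarith [hEnonneg x hx0]
    have h2 : 0 ≤ T x := hTnonneg x hx0
    have h3 : 1 - m1 * T x ≤ 0 := by
      have := hbig x hx1 hx2.le
      have := (div_lt_iff₀ hm1).mp this
      linarith
    exact mul_nonpos_of_nonneg_of_nonpos (mul_nonneg h1 h2) h3
  have hanti : AntitoneOn T (Set.Icc s t1) :=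
    antitoneOn_of_deriv_nonpos (convex_Icc s t1) hT.continuous.continuousOn
      (fun x _ => (hT x).differentiableWithinAt) hderiv
  have : T t1 ≤ T s := hanti ⟨le_refl s, hst1⟩ ⟨hst1, le_refl t1⟩ hst1
  linarith
end

section
/- Let (S, R, E, F) be a solution of Model (2) on [0,∞) with nonnegative initial values. Then S(t) ≥ 0, R(t) ≥ 0, E(t) ≥ 0 and F(t) ≥ 0 for all t ≥ 0. -/
/-!
Each equation of Model (2) has the form `y' = g(t) y + h(t)` with `g` continuous and, once the
components treated before are known to be nonnegative, `h ≥ 0`; the order F, E, S, R works.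
For such an equation the integrating factor makes `y(t) · exp (-∫₀ᵗ g)` nondecreasing, so
`y` cannot leave `[0, ∞)`.
-/

open Set Real

theorem hasDerivAt_mul_exp_neg_integral {y g : ℝ → ℝ} {a t : ℝ} (hy : DifferentiableAt ℝ y t)
    (hg : Continuous g) :
    HasDerivAt (fun s => y s * exp (-∫ u in a..s, g u))
      ((deriv y t - g t * y t) * exp (-∫ u in a..t, g u)) t := by
  have hG : HasDerivAt (fun s => ∫ u in a..s, g u) (g t) t :=
    intervalIntegral.integral_hasDerivAt_right (hg.intervalIntegrable a t)
      hg.stronglyMeasurable.stronglyMeasurableAtFilter hg.continuousAt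
  have hexp : HasDerivAt (fun s => exp (-∫ u in a..s, g u)) (exp (-∫ u in a..t, g u) * -g t) t :=
    hG.neg.exp
  exact (hy.hasDerivAt.fun_mul hexp).congr_deriv (by ring)

theorem nonneg_of_mul_le_deriv {y g : ℝ → ℝ} {a : ℝ} (hy : Differentiable ℝ y)
    (hg : Continuous g) (ha : 0 ≤ y a) (hd : ∀ t ≥ a, g t * y t ≤ deriv y t) :
    ∀ t ≥ a, 0 ≤ y t := by
  set w : ℝ → ℝ := fun s => y s * exp (-∫ u in a..s, g u)
  have hw : ∀ t, HasDerivAt w _ t := fun t => hasDerivAt_mul_exp_neg_integral (hy t) hg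
  have hmono : MonotoneOn w (Ici a) := by
    refine monotoneOn_of_deriv_nonneg (convex_Ici a)
      (fun t _ => (hw t).continuousAt.continuousWithinAt)
      (fun t _ => (hw t).differentiableAt.differentiableWithinAt) fun t ht => ?_
    rw [interior_Ici] at ht
    rw [(hw t).deriv]
    exact mul_nonneg (sub_nonneg.mpr (hd t ht.le)) (exp_pos _).le
  intro t ht
  have hwt : 0 ≤ w t := by
    calc 0 ≤ w a := by simpa [w] using ha
      _ ≤ w t := hmono self_mem_Ici ht ht
  exact nonneg_of_mul_nonneg_left hwt (exp_pos _)

theorem nonneg_of_mul_le_deriv_of_continuousOn {y g : ℝ → ℝ} {a : ℝ} (hy : Differentiable ℝ y)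
    (hg : ContinuousOn g (Ici a)) (ha : 0 ≤ y a) (hd : ∀ t ≥ a, g t * y t ≤ deriv y t) :
    ∀ t ≥ a, 0 ≤ y t := by
  refine nonneg_of_mul_le_deriv (g := fun t => g (max t a)) hy
    (hg.comp_continuous (by fun_prop) fun t => le_max_right t a) ha fun t ht => ?_
  simpa [max_eq_left ht] using hd t ht

theorem model2_nonneg_general
    (k1 k2 k3 m1 m2 r μ α c η a1 a2 a3 p : ℝ) (l : ℕ)
    (hr : 0 ≤ r) (hc : 0 ≤ c)
    (ha1 : 0 < a1) (ha2 : 0 < a2) (ha3 : 0 < a3) (hp0 : 0 < p)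
    (S R E F : ℝ → ℝ)
    (hS : Differentiable ℝ S) (hR : Differentiable ℝ R)
    (hE : Differentiable ℝ E) (hF : Differentiable ℝ F)
    (hS' : ∀ t ≥ (0:ℝ), deriv S t =
      (k1 * E t / (a1 + E t)) * S t * (1 - m1 * (S t + η * R t))
        - (c * a2 ^ l / (a2 ^ l + E t ^ l)) * S t
        - (c * a3 ^ l / (a3 ^ l + E t ^ l)) * S t)
    (hR' : ∀ t ≥ (0:ℝ), deriv R t =
      k3 * R t * (1 - m1 * (S t + η * R t))
        + (c * a3 ^ l / (a3 ^ l + E t ^ l)) * S t)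
    (hE' : ∀ t ≥ (0:ℝ), deriv E t = p * r * F t - μ * E t)
    (hF' : ∀ t ≥ (0:ℝ), deriv F t = k2 * F t * (1 - m2 * F t) - α * (S t + R t) * F t)
    (hS0 : 0 ≤ S 0) (hR0 : 0 ≤ R 0) (hE0 : 0 ≤ E 0) (hF0 : 0 ≤ F 0) :
    ∀ t ≥ (0:ℝ), 0 ≤ S t ∧ 0 ≤ R t ∧ 0 ≤ E t ∧ 0 ≤ F t := by
  have hSc := hS.continuous; have hRc := hR.continuous
  have hEc := hE.continuous; have hFc := hF.continuous
  have hFnn : ∀ t ≥ (0:ℝ), 0 ≤ F t :=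
    nonneg_of_mul_le_deriv (g := fun t => k2 * (1 - m2 * F t) - α * (S t + R t)) hF
      (by fun_prop) hF0 fun t ht => le_of_eq (by rw [hF' t ht]; ring)
  have hEnn : ∀ t ≥ (0:ℝ), 0 ≤ E t :=
    nonneg_of_mul_le_deriv (g := fun _ => -μ) hE continuous_const hE0 fun t ht => by
      have := mul_nonneg (mul_nonneg hp0.le hr) (hFnn t ht)
      rw [hE' t ht]; linarith
  -- The coefficient of `S` is continuous only on `[0, ∞)`: its denominators may vanish where `E < 0`.
  have hSnn : ∀ t ≥ (0:ℝ), 0 ≤ S t := by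
    have h1 : ∀ t ∈ Ici (0:ℝ), a1 + E t ≠ 0 := fun t ht => by have := hEnn t ht; positivity
    have h2 : ∀ t ∈ Ici (0:ℝ), a2 ^ l + E t ^ l ≠ 0 := fun t ht => by have := hEnn t ht; positivity
    have h3 : ∀ t ∈ Ici (0:ℝ), a3 ^ l + E t ^ l ≠ 0 := fun t ht => by have := hEnn t ht; positivity
    refine nonneg_of_mul_le_deriv_of_continuousOn (g := fun t =>
      k1 * E t / (a1 + E t) * (1 - m1 * (S t + η * R t))
        - c * a2 ^ l / (a2 ^ l + E t ^ l) - c * a3 ^ l / (a3 ^ l + E t ^ l)) hS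
      (by fun_prop (disch := assumption)) hS0 fun t ht => le_of_eq ?_
    rw [hS' t ht]; ring
  have hRnn : ∀ t ≥ (0:ℝ), 0 ≤ R t :=
    nonneg_of_mul_le_deriv (g := fun t => k3 * (1 - m1 * (S t + η * R t))) hR
      (by fun_prop) hR0 fun t ht => by
      have := hEnn t ht; have := hSnn t ht
      have : 0 ≤ c * a3 ^ l / (a3 ^ l + E t ^ l) * S t := by positivity
      rw [hR' t ht]; linarith
  exact fun t ht => ⟨hSnn t ht, hRnn t ht, hEnn t ht, hFnn t ht⟩

/-- Nonnegativity part of Proposition 2: a solution of Model (2) on [0,∞)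
with nonnegative initial values stays nonnegative. -/
theorem model2_nonneg
    (k1 k2 k3 m1 m2 r μ α c η a1 a2 a3 p : ℝ) (l : ℕ)
    (hk1 : 0 ≤ k1) (hk2 : 0 ≤ k2) (hk3 : 0 ≤ k3) (hm1 : 0 ≤ m1) (hm2 : 0 ≤ m2)
    (hr : 0 ≤ r) (hμ : 0 ≤ μ) (hα : 0 ≤ α) (hc : 0 ≤ c) (hη : 0 ≤ η)
    (ha1 : 0 < a1) (ha2 : 0 < a2) (ha3 : 0 < a3) (hp0 : 0 < p) (hp1 : p ≤ 1)
    (hl : 1 ≤ l)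
    (S R E F : ℝ → ℝ)
    (hS : Differentiable ℝ S) (hR : Differentiable ℝ R)
    (hE : Differentiable ℝ E) (hF : Differentiable ℝ F)
    (hS' : ∀ t ≥ (0:ℝ), deriv S t =
      (k1 * E t / (a1 + E t)) * S t * (1 - m1 * (S t + η * R t))
        - (c * a2 ^ l / (a2 ^ l + E t ^ l)) * S t
        - (c * a3 ^ l / (a3 ^ l + E t ^ l)) * S t)
    (hR' : ∀ t ≥ (0:ℝ), deriv R t =
      k3 * R t * (1 - m1 * (S t + η * R t))
        + (c * a3 ^ l / (a3 ^ l + E t ^ l)) * S t)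
    (hE' : ∀ t ≥ (0:ℝ), deriv E t = p * r * F t - μ * E t)
    (hF' : ∀ t ≥ (0:ℝ), deriv F t = k2 * F t * (1 - m2 * F t) - α * (S t + R t) * F t)
    (hS0 : 0 ≤ S 0) (hR0 : 0 ≤ R 0) (hE0 : 0 ≤ E 0) (hF0 : 0 ≤ F 0) :
    ∀ t ≥ (0:ℝ), 0 ≤ S t ∧ 0 ≤ R t ∧ 0 ≤ E t ∧ 0 ≤ F t :=
  model2_nonneg_general k1 k2 k3 m1 m2 r μ α c η a1 a2 a3 p l hr hc ha1 ha2 ha3 hp0 S R E F hS hR hE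
    hF hS' hR' hE' hF' hS0 hR0 hE0 hF0
end

section
/- Let (S, R, E, F) be a solution of Model (2) on [0,∞) with nonnegative initial values and with η ≤ 1. Let t ≥ 0 be a time at which S(t) ≥ 0, R(t) ≥ 0, E(t) ≥ 0 and m1·(S(t)+η·R(t)) ≤ 1. Then S'(t) + η·R'(t) ≤ max(k1, k3)·(S(t)+η·R(t))·(1 − m1·(S(t)+η·R(t))). -/
/-- Logistic differential inequality for the weighted total tumor volume
S + η·R in Model (2) (with η ≤ 1): at any time t ≥ 0 where the state is
nonnegative and m1·(S+η·R) ≤ 1, one has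
S' + η·R' ≤ max(k1,k3)·(S+η·R)·(1 − m1·(S+η·R)). -/
theorem model2_weighted_tumor_inequality
    (k1 k2 k3 m1 m2 r μ α c η a1 a2 a3 p : ℝ) (l : ℕ)
    (hk1 : 0 ≤ k1) (hk2 : 0 ≤ k2) (hk3 : 0 ≤ k3) (hm1 : 0 ≤ m1) (hm2 : 0 ≤ m2)
    (hr : 0 ≤ r) (hμ : 0 ≤ μ) (hα : 0 ≤ α) (hc : 0 ≤ c) (hη : 0 ≤ η)
    (ha1 : 0 < a1) (ha2 : 0 < a2) (ha3 : 0 < a3) (hp0 : 0 < p) (hp1 : p ≤ 1)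
    (hl : 1 ≤ l)
    (S R E F : ℝ → ℝ)
    (hS : Differentiable ℝ S) (hR : Differentiable ℝ R)
    (hE : Differentiable ℝ E) (hF : Differentiable ℝ F)
    (hS' : ∀ t ≥ (0:ℝ), deriv S t =
      (k1 * E t / (a1 + E t)) * S t * (1 - m1 * (S t + η * R t))
        - (c * a2 ^ l / (a2 ^ l + E t ^ l)) * S t
        - (c * a3 ^ l / (a3 ^ l + E t ^ l)) * S t)
    (hR' : ∀ t ≥ (0:ℝ), deriv R t =
      k3 * R t * (1 - m1 * (S t + η * R t))
        + (c * a3 ^ l / (a3 ^ l + E t ^ l)) * S t)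
    (hE' : ∀ t ≥ (0:ℝ), deriv E t = p * r * F t - μ * E t)
    (hF' : ∀ t ≥ (0:ℝ), deriv F t = k2 * F t * (1 - m2 * F t) - α * (S t + R t) * F t)
    (hS0 : 0 ≤ S 0) (hR0 : 0 ≤ R 0) (hE0 : 0 ≤ E 0) (hF0 : 0 ≤ F 0)
    (hη1 : η ≤ 1)
    (t : ℝ) (ht : 0 ≤ t)
    (hSt : 0 ≤ S t) (hRt : 0 ≤ R t) (hEt : 0 ≤ E t)
    (hbound : m1 * (S t + η * R t) ≤ 1) :
    deriv S t + η * deriv R t ≤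
      max k1 k3 * (S t + η * R t) * (1 - m1 * (S t + η * R t)) := by
  have hW : 0 ≤ 1 - m1 * (S t + η * R t) := by linarith
  have hEt' : 0 < a1 + E t := by linarith
  have hEl : (0:ℝ) ≤ E t ^ l := pow_nonneg hEt l
  have ha2l : (0:ℝ) < a2 ^ l := pow_pos ha2 l
  have ha3l : (0:ℝ) < a3 ^ l := pow_pos ha3 l
  have hA2 : 0 ≤ c * a2 ^ l / (a2 ^ l + E t ^ l) :=
    div_nonneg (mul_nonneg hc ha2l.le) (by linarith)
  have hA3 : 0 ≤ c * a3 ^ l / (a3 ^ l + E t ^ l) :=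
    div_nonneg (mul_nonneg hc ha3l.le) (by linarith)
  have hfrac : k1 * E t / (a1 + E t) ≤ k1 := by
    rw [div_le_iff₀ hEt']
    nlinarith [mul_nonneg hk1 hEt]
  have hfrac0 : 0 ≤ k1 * E t / (a1 + E t) :=
    div_nonneg (mul_nonneg hk1 hEt) hEt'.le
  have hk1max : k1 ≤ max k1 k3 := le_max_left _ _
  have hk3max : k3 ≤ max k1 k3 := le_max_right _ _
  rw [hS' t ht, hR' t ht]
  have h1 : (k1 * E t / (a1 + E t)) * S t * (1 - m1 * (S t + η * R t))
      ≤ max k1 k3 * S t * (1 - m1 * (S t + η * R t)) := by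
    apply mul_le_mul_of_nonneg_right _ hW
    exact mul_le_mul_of_nonneg_right (hfrac.trans hk1max) hSt
  have h2 : η * (k3 * R t * (1 - m1 * (S t + η * R t)))
      ≤ max k1 k3 * (η * R t) * (1 - m1 * (S t + η * R t)) := by
    have h := mul_le_mul_of_nonneg_left (mul_le_mul_of_nonneg_right hk3max hRt) hη
    have h' := mul_le_mul_of_nonneg_right h hW
    calc η * (k3 * R t * (1 - m1 * (S t + η * R t)))
        = η * (k3 * R t) * (1 - m1 * (S t + η * R t)) := by ring
      _ ≤ η * (max k1 k3 * R t) * (1 - m1 * (S t + η * R t)) := h'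
      _ = max k1 k3 * (η * R t) * (1 - m1 * (S t + η * R t)) := by ring
  have h3 : η * ((c * a3 ^ l / (a3 ^ l + E t ^ l)) * S t)
      ≤ (c * a3 ^ l / (a3 ^ l + E t ^ l)) * S t := by
    have := mul_nonneg hA3 hSt
    nlinarith
  have h4 : 0 ≤ (c * a2 ^ l / (a2 ^ l + E t ^ l)) * S t := mul_nonneg hA2 hSt
  have hRHS : max k1 k3 * (S t + η * R t) * (1 - m1 * (S t + η * R t))
      = max k1 k3 * S t * (1 - m1 * (S t + η * R t))
        + max k1 k3 * (η * R t) * (1 - m1 * (S t + η * R t)) := by ring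
  rw [hRHS]
  have hLHS : k1 * E t / (a1 + E t) * S t * (1 - m1 * (S t + η * R t))
        - c * a2 ^ l / (a2 ^ l + E t ^ l) * S t
        - c * a3 ^ l / (a3 ^ l + E t ^ l) * S t
      + η * (k3 * R t * (1 - m1 * (S t + η * R t))
        + c * a3 ^ l / (a3 ^ l + E t ^ l) * S t)
      = k1 * E t / (a1 + E t) * S t * (1 - m1 * (S t + η * R t))
        + η * (k3 * R t * (1 - m1 * (S t + η * R t)))
        + (η * ((c * a3 ^ l / (a3 ^ l + E t ^ l)) * S t)
            - (c * a3 ^ l / (a3 ^ l + E t ^ l)) * S t)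
        - (c * a2 ^ l / (a2 ^ l + E t ^ l)) * S t := by ring
  rw [hLHS]
  linarith
end

section
/- Let (S, R, E, F) be a solution of Model (2) on [0,∞) with nonnegative initial values, with m1 > 0 and 0 < η ≤ 1, and suppose S(t) ≥ 0, R(t) ≥ 0, E(t) ≥ 0 for all t ≥ 0 (which holds by Proposition 2). If S(0) + η·R(0) ≤ 1/m1, then S(t) + η·R(t) ≤ 1/m1 for all t ≥ 0; in particular S and R are bounded above on [0,∞). -/
/-!
The weighted tumour burden `W = S + η R` satisfies
`W' = (k₁E/(a₁+E) S + η k₃ R)(1 - m₁W) - c₂ S - (1 - η) c₃ S`,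
where `c₂, c₃` are the two Hill-type treatment rates; the transfer term `c₃ S` leaves `S` with
weight `1` and enters `R` with weight `η ≤ 1`. Hence `W' ≤ 0` wherever `W ≥ 1/m₁`, and a
barrier argument keeps `W` below `1/m₁`.
-/

/-- Pushing the level up by the barrier `ε (x - a + 1)`, of positive slope, turns the
non-strict sign condition on `f'` into the strict one required by the fencing theorem. -/
theorem image_le_of_deriv_nonpos_above {f f' : ℝ → ℝ} {a K : ℝ}
    (hf : ∀ x ≥ a, HasDerivAt f (f' x) x) (ha : f a ≤ K)
    (hf' : ∀ x ≥ a, K ≤ f x → f' x ≤ 0) :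
    ∀ x ≥ a, f x ≤ K := by
  intro t ht
  refine le_of_forall_pos_le_add fun δ hδ => ?_
  have hlen : 0 < t - a + 1 := by linarith
  set ε := δ / (t - a + 1)
  have hε : 0 < ε := div_pos hδ hlen
  have fence := image_le_of_deriv_right_lt_deriv_boundary (a := a) (b := t)
    (B := fun x => K + ε * (x - a + 1)) (B' := fun _ => ε)
    (fun x hx => (hf x hx.1).continuousAt.continuousWithinAt)
    (fun x hx => (hf x hx.1).hasDerivWithinAt)
    (by linarith)
    (fun x => by simpa using (((hasDerivAt_id x).sub_const a).add_const 1).const_mul ε |>.const_add K)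
    (fun x hx hfx => (hf' x hx.1 (by nlinarith [hx.1])).trans_lt hε)
    ⟨ht, le_rfl⟩
  calc f t ≤ K + ε * (t - a + 1) := fence
    _ = K + δ := by rw [div_mul_cancel₀ δ hlen.ne']

theorem model2_weighted_tumor_rhs_nonpos {k1 k3 m1 c η a1 a2 a3 s ρ e : ℝ} (l : ℕ)
    (hk1 : 0 ≤ k1) (hk3 : 0 ≤ k3) (hc : 0 ≤ c) (hη : 0 ≤ η) (hη1 : η ≤ 1)
    (ha1 : 0 ≤ a1) (ha2 : 0 ≤ a2) (ha3 : 0 ≤ a3) (hs : 0 ≤ s) (hρ : 0 ≤ ρ) (he : 0 ≤ e)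
    (hcap : 1 ≤ m1 * (s + η * ρ)) :
    (k1 * e / (a1 + e)) * s * (1 - m1 * (s + η * ρ))
        - (c * a2 ^ l / (a2 ^ l + e ^ l)) * s - (c * a3 ^ l / (a3 ^ l + e ^ l)) * s
      + η * (k3 * ρ * (1 - m1 * (s + η * ρ)) + (c * a3 ^ l / (a3 ^ l + e ^ l)) * s) ≤ 0 := by
  have hlogistic : 1 - m1 * (s + η * ρ) ≤ 0 := by linarith
  have hgrowth : 0 ≤ k1 * e / (a1 + e) * s + η * (k3 * ρ) := by positivity
  have hkill : 0 ≤ c * a2 ^ l / (a2 ^ l + e ^ l) * s := by positivity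
  have htransfer : 0 ≤ c * a3 ^ l / (a3 ^ l + e ^ l) * s := by positivity
  nlinarith [mul_nonpos_of_nonneg_of_nonpos hgrowth hlogistic,
    mul_nonneg (sub_nonneg.mpr hη1) htransfer]

theorem model2_weighted_tumor_bounded_general
    (k1 k3 m1 c η a1 a2 a3 : ℝ) (l : ℕ)
    (hk1 : 0 ≤ k1) (hk3 : 0 ≤ k3) (hm1 : 0 < m1)
    (hc : 0 ≤ c) (hη : 0 < η)
    (ha1 : 0 < a1) (ha2 : 0 < a2) (ha3 : 0 < a3)
    (S R E : ℝ → ℝ)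
    (hS : Differentiable ℝ S) (hR : Differentiable ℝ R)
    (hS' : ∀ t ≥ (0:ℝ), deriv S t =
      (k1 * E t / (a1 + E t)) * S t * (1 - m1 * (S t + η * R t))
        - (c * a2 ^ l / (a2 ^ l + E t ^ l)) * S t
        - (c * a3 ^ l / (a3 ^ l + E t ^ l)) * S t)
    (hR' : ∀ t ≥ (0:ℝ), deriv R t =
      k3 * R t * (1 - m1 * (S t + η * R t))
        + (c * a3 ^ l / (a3 ^ l + E t ^ l)) * S t)
    (hη1 : η ≤ 1)
    (hSnonneg : ∀ t ≥ (0:ℝ), 0 ≤ S t) (hRnonneg : ∀ t ≥ (0:ℝ), 0 ≤ R t)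
    (hEnonneg : ∀ t ≥ (0:ℝ), 0 ≤ E t)
    (hinit : S 0 + η * R 0 ≤ 1 / m1) :
    (∀ t ≥ (0:ℝ), S t + η * R t ≤ 1 / m1) ∧
      (∃ M : ℝ, ∀ t ≥ (0:ℝ), S t ≤ M ∧ R t ≤ M) := by
  have hW : ∀ t ≥ (0:ℝ), HasDerivAt (fun t => S t + η * R t) (deriv S t + η * deriv R t) t :=
    fun t _ => (hS t).hasDerivAt.add ((hR t).hasDerivAt.const_mul η)
  have hbound : ∀ t ≥ (0:ℝ), S t + η * R t ≤ 1 / m1 := by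
    refine image_le_of_deriv_nonpos_above hW hinit fun t ht hcap => ?_
    rw [hS' t ht, hR' t ht]
    refine model2_weighted_tumor_rhs_nonpos l hk1 hk3 hc hη.le hη1 ha1.le ha2.le ha3.le
      (hSnonneg t ht) (hRnonneg t ht) (hEnonneg t ht) ?_
    rwa [div_le_iff₀' hm1] at hcap
  refine ⟨hbound, max (1 / m1) (1 / m1 / η), fun t ht => ⟨?_, ?_⟩⟩
  · have := mul_nonneg hη.le (hRnonneg t ht)
    exact le_max_of_le_left (by linarith [hbound t ht])
  · refine le_max_of_le_right ((le_div_iff₀ hη).mpr ?_)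
    linarith [hbound t ht, hSnonneg t ht]

/-- Forward invariance of the region {S + η·R ≤ 1/m1} for Model (2)
(m1 > 0, 0 < η ≤ 1): if S(0) + η·R(0) ≤ 1/m1 then S(t) + η·R(t) ≤ 1/m1 for all
t ≥ 0; in particular S and R are bounded above on [0,∞). -/
theorem model2_weighted_tumor_bounded
    (k1 k2 k3 m1 m2 r μ α c η a1 a2 a3 p : ℝ) (l : ℕ)
    (hk1 : 0 ≤ k1) (hk2 : 0 ≤ k2) (hk3 : 0 ≤ k3) (hm1 : 0 < m1) (hm2 : 0 ≤ m2)
    (hr : 0 ≤ r) (hμ : 0 ≤ μ) (hα : 0 ≤ α) (hc : 0 ≤ c) (hη : 0 < η)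
    (ha1 : 0 < a1) (ha2 : 0 < a2) (ha3 : 0 < a3) (hp0 : 0 < p) (hp1 : p ≤ 1)
    (hl : 1 ≤ l)
    (S R E F : ℝ → ℝ)
    (hS : Differentiable ℝ S) (hR : Differentiable ℝ R)
    (hE : Differentiable ℝ E) (hF : Differentiable ℝ F)
    (hS' : ∀ t ≥ (0:ℝ), deriv S t =
      (k1 * E t / (a1 + E t)) * S t * (1 - m1 * (S t + η * R t))
        - (c * a2 ^ l / (a2 ^ l + E t ^ l)) * S t
        - (c * a3 ^ l / (a3 ^ l + E t ^ l)) * S t)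
    (hR' : ∀ t ≥ (0:ℝ), deriv R t =
      k3 * R t * (1 - m1 * (S t + η * R t))
        + (c * a3 ^ l / (a3 ^ l + E t ^ l)) * S t)
    (hE' : ∀ t ≥ (0:ℝ), deriv E t = p * r * F t - μ * E t)
    (hF' : ∀ t ≥ (0:ℝ), deriv F t = k2 * F t * (1 - m2 * F t) - α * (S t + R t) * F t)
    (hS0 : 0 ≤ S 0) (hR0 : 0 ≤ R 0) (hE0 : 0 ≤ E 0) (hF0 : 0 ≤ F 0)
    (hη1 : η ≤ 1)
    (hSnonneg : ∀ t ≥ (0:ℝ), 0 ≤ S t) (hRnonneg : ∀ t ≥ (0:ℝ), 0 ≤ R t)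
    (hEnonneg : ∀ t ≥ (0:ℝ), 0 ≤ E t)
    (hinit : S 0 + η * R 0 ≤ 1 / m1) :
    (∀ t ≥ (0:ℝ), S t + η * R t ≤ 1 / m1) ∧
      (∃ M : ℝ, ∀ t ≥ (0:ℝ), S t ≤ M ∧ R t ≤ M) :=
  model2_weighted_tumor_bounded_general k1 k3 m1 c η a1 a2 a3 l hk1 hk3 hm1 hc hη ha1 ha2 ha3 S R E
    hS hR hS' hR' hη1 hSnonneg hRnonneg hEnonneg hinit
end

section
/- Let (S, R, E, F) be a solution of Model (2) on [0,∞) with nonnegative initial values, with m2 > 0, and suppose S(t) ≥ 0, R(t) ≥ 0, F(t) ≥ 0 for all t ≥ 0 (which holds by Proposition 2). If F(0) ≤ 1/m2, then F(t) ≤ 1/m2 for all t ≥ 0. -/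
/-- Forward invariance of the region {F ≤ 1/m2} for Model (2) (m2 > 0):
if F(0) ≤ 1/m2 then F(t) ≤ 1/m2 for all t ≥ 0. -/
theorem model2_fat_bounded
    (k1 k2 k3 m1 m2 r μ α c η a1 a2 a3 p : ℝ) (l : ℕ)
    (hk1 : 0 ≤ k1) (hk2 : 0 ≤ k2) (hk3 : 0 ≤ k3) (hm1 : 0 ≤ m1) (hm2 : 0 < m2)
    (hr : 0 ≤ r) (hμ : 0 ≤ μ) (hα : 0 ≤ α) (hc : 0 ≤ c) (hη : 0 ≤ η)
    (ha1 : 0 < a1) (ha2 : 0 < a2) (ha3 : 0 < a3) (hp0 : 0 < p) (hp1 : p ≤ 1)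
    (hl : 1 ≤ l)
    (S R E F : ℝ → ℝ)
    (hS : Differentiable ℝ S) (hR : Differentiable ℝ R)
    (hE : Differentiable ℝ E) (hF : Differentiable ℝ F)
    (hS' : ∀ t ≥ (0:ℝ), deriv S t =
      (k1 * E t / (a1 + E t)) * S t * (1 - m1 * (S t + η * R t))
        - (c * a2 ^ l / (a2 ^ l + E t ^ l)) * S t
        - (c * a3 ^ l / (a3 ^ l + E t ^ l)) * S t)
    (hR' : ∀ t ≥ (0:ℝ), deriv R t =
      k3 * R t * (1 - m1 * (S t + η * R t))
        + (c * a3 ^ l / (a3 ^ l + E t ^ l)) * S t)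
    (hE' : ∀ t ≥ (0:ℝ), deriv E t = p * r * F t - μ * E t)
    (hF' : ∀ t ≥ (0:ℝ), deriv F t = k2 * F t * (1 - m2 * F t) - α * (S t + R t) * F t)
    (hS0 : 0 ≤ S 0) (hR0 : 0 ≤ R 0) (hE0 : 0 ≤ E 0) (hF0 : 0 ≤ F 0)
    (hSnonneg : ∀ t ≥ (0:ℝ), 0 ≤ S t) (hRnonneg : ∀ t ≥ (0:ℝ), 0 ≤ R t)
    (hFnonneg : ∀ t ≥ (0:ℝ), 0 ≤ F t)
    (hinit : F 0 ≤ 1 / m2) :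
    ∀ t ≥ (0:ℝ), F t ≤ 1 / m2 := by

  intro t₀ ht₀
  by_contra hcon
  push_neg at hcon
  set a := 1/m2 with ha
  -- set of times in [0,t₀] where F ≤ a
  set K : Set ℝ := {t | t ∈ Set.Icc (0:ℝ) t₀ ∧ F t ≤ a} with hK
  have hKne : K.Nonempty := ⟨0, ⟨le_refl 0, ht₀⟩, hinit⟩
  have hKbdd : BddAbove K := ⟨t₀, fun x hx => hx.1.2⟩
  have hKclosed : IsClosed K := by
    have : K = Set.Icc (0:ℝ) t₀ ∩ F ⁻¹' Set.Iic a := rfl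
    rw [this]
    exact isClosed_Icc.inter (isClosed_Iic.preimage hF.continuous)
  set s := sSup K with hs
  have hsK : s ∈ K := hKclosed.csSup_mem hKne hKbdd
  have hs0 : 0 ≤ s := hsK.1.1
  have hst₀ : s ≤ t₀ := hsK.1.2
  have hFs : F s ≤ a := hsK.2
  have hslt : s < t₀ := lt_of_le_of_ne hst₀ (by intro h; rw [h] at hFs; exact absurd hFs (not_le.mpr hcon))
  have hgt : ∀ t ∈ Set.Ioc s t₀, a < F t := by
    intro t ht
    by_contra h
    push_neg at h
    have : t ∈ K := ⟨⟨le_trans hs0 ht.1.le, ht.2⟩, h⟩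
    exact absurd (le_csSup hKbdd this) (not_le.mpr ht.1)
  have hanti : AntitoneOn F (Set.Icc s t₀) := by
    apply antitoneOn_of_deriv_nonpos (convex_Icc s t₀) hF.continuous.continuousOn
      (fun x _ => (hF x).differentiableWithinAt)
    intro x hx
    rw [interior_Icc] at hx
    have hx0 : (0:ℝ) ≤ x := le_trans hs0 hx.1.le
    have hFx : a < F x := hgt x ⟨hx.1, hx.2.le⟩
    have hFx0 : 0 ≤ F x := hFnonneg x hx0
    rw [hF' x hx0]
    have h1 : 1 - m2 * F x ≤ 0 := by
      have h3 := (div_lt_iff₀ hm2).mp hFx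
      have : 1 < m2 * F x := by linarith
      linarith
    have h2 : 0 ≤ α * (S x + R x) * F x := by
      have := hSnonneg x hx0
      have := hRnonneg x hx0
      positivity
    nlinarith [mul_nonneg hk2 hFx0]
  have : F t₀ ≤ F s := hanti ⟨le_refl s, hst₀⟩ ⟨hst₀, le_refl t₀⟩ hst₀
  exact absurd (le_trans this hFs) (not_le.mpr hcon)
end

section
/- Let (S, R, E, F) be a solution of Model (2) on [0,∞) with nonnegative initial values and μ > 0, and suppose 0 ≤ F(t) ≤ M for all t ≥ 0, for some constant M ≥ 0. Then for all t ≥ 0, E(t) ≤ p·r·M/μ + (E(0) − p·r·M/μ)·exp(−μ·t); in particular limsup_{t→∞} E(t) ≤ p·r·M/μ and E is bounded above on [0,∞). -/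
/-!
Since `0 ≤ F ≤ M`, the estrogen equation gives the differential inequalities
`-μ E ≤ E' ≤ p r M - μ E`. Grönwall's inequality with the negative rate `-μ` compares `E`
with the solutions `p r M / μ + (E 0 - p r M / μ) e^{-μ t}` and `E 0 e^{-μ t}` of the
corresponding linear equations; the upper comparison is the claimed estimate, and the two
together squeeze `E` between `-|E 0|` and `p r M / μ + |E 0 - p r M / μ|`.
-/

open Filter Real

theorem le_gronwallBound_of_deriv_le {f : ℝ → ℝ} {δ K ε a : ℝ} (hf : Differentiable ℝ f)
    (ha : f a ≤ δ) (bound : ∀ x ≥ a, deriv f x ≤ K * f x + ε) :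
    ∀ x ≥ a, f x ≤ gronwallBound δ K ε (x - a) := by
  intro x hx
  refine le_gronwallBound_of_liminf_deriv_right_le hf.continuous.continuousOn
    (fun y _ r hr => ?_) ha (fun y hy => bound y hy.1) x ⟨hx, le_rfl⟩
  simpa [slope_def_field, div_eq_inv_mul] using
    (hf y).hasDerivAt.hasDerivWithinAt.liminf_right_slope_le hr

theorem gronwallBound_neg {μ : ℝ} (hμ : μ ≠ 0) (δ ε x : ℝ) :
    gronwallBound δ (-μ) ε x = ε / μ + (δ - ε / μ) * exp (-μ * x) := by
  rw [gronwallBound_of_K_ne_0 (neg_ne_zero.mpr hμ)]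
  field_simp
  ring

theorem le_of_deriv_le_sub_mul {f : ℝ → ℝ} {μ b : ℝ} (hμ : μ ≠ 0) (hf : Differentiable ℝ f)
    (hderiv : ∀ t ≥ 0, deriv f t ≤ b - μ * f t) :
    ∀ t ≥ 0, f t ≤ b / μ + (f 0 - b / μ) * exp (-μ * t) := by
  intro t ht
  have h := le_gronwallBound_of_deriv_le (K := -μ) (ε := b) hf le_rfl
    (fun x hx => by linarith [hderiv x hx]) t ht
  rwa [sub_zero, gronwallBound_neg hμ] at h

theorem tendsto_add_mul_exp_neg_mul_atTop {μ : ℝ} (hμ : 0 < μ) (c d : ℝ) :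
    Tendsto (fun t => c + d * exp (-μ * t)) atTop (nhds c) := by
  have h : Tendsto (fun t => exp (-μ * t)) atTop (nhds 0) :=
    tendsto_exp_atBot.comp (tendsto_id.const_mul_atTop_of_neg (neg_neg_iff_pos.2 hμ))
  simpa using (h.const_mul d).const_add c

theorem abs_mul_exp_neg_mul_le {μ t : ℝ} (hμ : 0 ≤ μ) (ht : 0 ≤ t) (d : ℝ) :
    |d * exp (-μ * t)| ≤ |d| := by
  rw [abs_mul, abs_exp]
  exact mul_le_of_le_one_right (abs_nonneg d) (exp_le_one_iff.2 (by nlinarith))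

theorem model2_estrogen_bounded_general
    (r μ p : ℝ)
    (hr : 0 ≤ r) (hμ : 0 < μ) (hp0 : 0 < p)
    (E F : ℝ → ℝ)
    (hE : Differentiable ℝ E)
    (hE' : ∀ t ≥ (0:ℝ), deriv E t = p * r * F t - μ * E t)
    (M : ℝ)
    (hFbdd : ∀ t ≥ (0:ℝ), 0 ≤ F t ∧ F t ≤ M) :
    (∀ t ≥ (0:ℝ),
        E t ≤ p * r * M / μ + (E 0 - p * r * M / μ) * Real.exp (-μ * t)) ∧
      limsup E atTop ≤ p * r * M / μ ∧
      (∃ B : ℝ, ∀ t ≥ (0:ℝ), E t ≤ B) := by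
  set K := p * r * M / μ
  have hpr : 0 ≤ p * r := mul_nonneg hp0.le hr
  have upper : ∀ t ≥ 0, E t ≤ K + (E 0 - K) * exp (-μ * t) :=
    le_of_deriv_le_sub_mul hμ.ne' hE fun t ht => by
      rw [hE' t ht]; gcongr; exact (hFbdd t ht).2
  have lower : ∀ t ≥ 0, -|E 0| ≤ E t := fun t ht => by
    have h := le_of_deriv_le_sub_mul (b := 0) hμ.ne' hE.neg (fun t ht => by
      rw [deriv.neg, Pi.neg_apply, hE' t ht]; linarith [mul_nonneg hpr (hFbdd t ht).1]) t ht
    simp only [zero_div, sub_zero, zero_add, Pi.neg_apply] at h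
    linarith [neg_abs_le (E 0 * exp (-μ * t)), abs_mul_exp_neg_mul_le hμ.le ht (E 0)]
  refine ⟨upper, ?_, K + |E 0 - K|, fun t ht => ?_⟩
  · have hlim := tendsto_add_mul_exp_neg_mul_atTop hμ K (E 0 - K)
    have hbdd : IsBoundedUnder (· ≥ ·) atTop E :=
      ⟨-|E 0|, eventually_map.2 ((eventually_ge_atTop 0).mono lower)⟩
    calc limsup E atTop ≤ limsup (fun t => K + (E 0 - K) * exp (-μ * t)) atTop :=
          limsup_le_limsup ((eventually_ge_atTop 0).mono upper) hbdd.isCoboundedUnder_le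
            hlim.isBoundedUnder_le
      _ = K := hlim.limsup_eq
  · linarith [upper t ht, le_abs_self ((E 0 - K) * exp (-μ * t)),
      abs_mul_exp_neg_mul_le hμ.le ht (E 0 - K)]

/-- Grönwall-type bound for the estrogen concentration in Model (2) (μ > 0):
if 0 ≤ F(t) ≤ M for all t ≥ 0, then
E(t) ≤ p·r·M/μ + (E(0) − p·r·M/μ)·exp(−μ·t) for all t ≥ 0; in particular
limsup_{t→∞} E(t) ≤ p·r·M/μ and E is bounded above on [0,∞). -/
theorem model2_estrogen_bounded
    (k1 k2 k3 m1 m2 r μ α c η a1 a2 a3 p : ℝ) (l : ℕ)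
    (hk1 : 0 ≤ k1) (hk2 : 0 ≤ k2) (hk3 : 0 ≤ k3) (hm1 : 0 ≤ m1) (hm2 : 0 ≤ m2)
    (hr : 0 ≤ r) (hμ : 0 < μ) (hα : 0 ≤ α) (hc : 0 ≤ c) (hη : 0 ≤ η)
    (ha1 : 0 < a1) (ha2 : 0 < a2) (ha3 : 0 < a3) (hp0 : 0 < p) (hp1 : p ≤ 1)
    (hl : 1 ≤ l)
    (S R E F : ℝ → ℝ)
    (hS : Differentiable ℝ S) (hR : Differentiable ℝ R)
    (hE : Differentiable ℝ E) (hF : Differentiable ℝ F)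
    (hS' : ∀ t ≥ (0:ℝ), deriv S t =
      (k1 * E t / (a1 + E t)) * S t * (1 - m1 * (S t + η * R t))
        - (c * a2 ^ l / (a2 ^ l + E t ^ l)) * S t
        - (c * a3 ^ l / (a3 ^ l + E t ^ l)) * S t)
    (hR' : ∀ t ≥ (0:ℝ), deriv R t =
      k3 * R t * (1 - m1 * (S t + η * R t))
        + (c * a3 ^ l / (a3 ^ l + E t ^ l)) * S t)
    (hE' : ∀ t ≥ (0:ℝ), deriv E t = p * r * F t - μ * E t)
    (hF' : ∀ t ≥ (0:ℝ), deriv F t = k2 * F t * (1 - m2 * F t) - α * (S t + R t) * F t)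
    (hS0 : 0 ≤ S 0) (hR0 : 0 ≤ R 0) (hE0 : 0 ≤ E 0) (hF0 : 0 ≤ F 0)
    (M : ℝ) (hM : 0 ≤ M)
    (hFbdd : ∀ t ≥ (0:ℝ), 0 ≤ F t ∧ F t ≤ M) :
    (∀ t ≥ (0:ℝ),
        E t ≤ p * r * M / μ + (E 0 - p * r * M / μ) * Real.exp (-μ * t)) ∧
      limsup E atTop ≤ p * r * M / μ ∧
      (∃ B : ℝ, ∀ t ≥ (0:ℝ), E t ≤ B) :=
  model2_estrogen_bounded_general r μ p hr hμ hp0 E F hE hE' M hFbdd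
end

section
/- Let f : ℝ⁴ × ℝ → ℝ⁴ be the right-hand side of the controlled Model (2) system, i.e. f((S,R,E,F), u) = ((k1·E/(a1+E))·S·(1 − m1·(S+η·R)) − (c·a2^l/(a2^l+E^l))·S − (c·a3^l/(a3^l+E^l))·S, k3·R·(1 − m1·(S+η·R)) + (c·a3^l/(a3^l+E^l))·S, (1−u)·r·F − μ·E, k2·F·(1 − m2·F) − α·(S+R)·F). Assume m1, m2 > 0. Then there exists a constant C > 0, depending only on the parameters, such that for every (S,R,E,F) with S, R, E, F ≥ 0, S + η·R ≤ 1/m1 and F ≤ 1/m2, and every u ∈ [0, 1], the Euclidean norms satisfy ‖f((S,R,E,F), u)‖ ≤ C·(‖(S,R,E,F)‖ + |u|). -/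
lemma sqrt_le_abs4 (a b c d : ℝ) :
    Real.sqrt (a ^ 2 + b ^ 2 + c ^ 2 + d ^ 2) ≤ |a| + |b| + |c| + |d| := by
  have h : a ^ 2 + b ^ 2 + c ^ 2 + d ^ 2 ≤ (|a| + |b| + |c| + |d|) ^ 2 := by
    nlinarith [sq_abs a, sq_abs b, sq_abs c, sq_abs d,
      mul_nonneg (abs_nonneg a) (abs_nonneg b), mul_nonneg (abs_nonneg a) (abs_nonneg c),
      mul_nonneg (abs_nonneg a) (abs_nonneg d), mul_nonneg (abs_nonneg b) (abs_nonneg c),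
      mul_nonneg (abs_nonneg b) (abs_nonneg d), mul_nonneg (abs_nonneg c) (abs_nonneg d)]
  calc Real.sqrt (a ^ 2 + b ^ 2 + c ^ 2 + d ^ 2)
      ≤ Real.sqrt ((|a| + |b| + |c| + |d|) ^ 2) := Real.sqrt_le_sqrt h
    _ = |a| + |b| + |c| + |d| := Real.sqrt_sq (by positivity)

/-- Linear growth bound on the controlled Model (2) vector field on the
forward-invariant bounded region of nonnegative states: there is a constant
C > 0, depending only on the parameters, such that
‖f((S,R,E,F),u)‖ ≤ C·(‖(S,R,E,F)‖ + |u|) (Euclidean norms) whenever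
S, R, E, F ≥ 0, S + η·R ≤ 1/m1, F ≤ 1/m2 and u ∈ [0,1]. -/
theorem controlled_model2_linear_growth
    (k1 k2 k3 m1 m2 r μ α c η a1 a2 a3 : ℝ) (l : ℕ)
    (hk1 : 0 ≤ k1) (hk2 : 0 ≤ k2) (hk3 : 0 ≤ k3) (hm1 : 0 < m1) (hm2 : 0 < m2)
    (hr : 0 ≤ r) (hμ : 0 ≤ μ) (hα : 0 ≤ α) (hc : 0 ≤ c) (hη : 0 ≤ η)
    (ha1 : 0 < a1) (ha2 : 0 < a2) (ha3 : 0 < a3)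
    (hl : 1 ≤ l) :
    ∃ C > (0:ℝ), ∀ S R E F u : ℝ,
      0 ≤ S → 0 ≤ R → 0 ≤ E → 0 ≤ F →
      S + η * R ≤ 1 / m1 → F ≤ 1 / m2 → u ∈ Set.Icc (0:ℝ) 1 →
      Real.sqrt
        (((k1 * E / (a1 + E)) * S * (1 - m1 * (S + η * R))
            - (c * a2 ^ l / (a2 ^ l + E ^ l)) * S
            - (c * a3 ^ l / (a3 ^ l + E ^ l)) * S) ^ 2
          + (k3 * R * (1 - m1 * (S + η * R))
              + (c * a3 ^ l / (a3 ^ l + E ^ l)) * S) ^ 2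
          + ((1 - u) * r * F - μ * E) ^ 2
          + (k2 * F * (1 - m2 * F) - α * (S + R) * F) ^ 2) ≤
        C * (Real.sqrt (S ^ 2 + R ^ 2 + E ^ 2 + F ^ 2) + |u|) := by
  set K : ℝ := k1 + k2 + k3 + r + μ + 3 * c + α / m2 + 1 with hK
  have hd : 0 ≤ α / m2 := by positivity
  have hKpos : 0 < K := by positivity
  refine ⟨4 * K, by positivity, ?_⟩
  intro S R E F u hS hR hE hF hSR hFm ⟨hu0, hu1⟩
  have hElpos : (0:ℝ) ≤ E ^ l := pow_nonneg hE l
  have ha2l : (0:ℝ) < a2 ^ l := pow_pos ha2 l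
  have ha3l : (0:ℝ) < a3 ^ l := pow_pos ha3 l
  -- the three saturation ratios, and the logistic factors
  have ht1 : 0 ≤ k1 * E / (a1 + E) := by positivity
  have ht1' : k1 * E / (a1 + E) ≤ k1 := by
    rw [div_le_iff₀ (by linarith)]; linarith [mul_nonneg hk1 ha1.le]
  have ht2 : 0 ≤ c * a2 ^ l / (a2 ^ l + E ^ l) := by positivity
  have ht2' : c * a2 ^ l / (a2 ^ l + E ^ l) ≤ c := by
    rw [div_le_iff₀ (by positivity)]; linarith [mul_nonneg hc hElpos]
  have ht3 : 0 ≤ c * a3 ^ l / (a3 ^ l + E ^ l) := by positivity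
  have ht3' : c * a3 ^ l / (a3 ^ l + E ^ l) ≤ c := by
    rw [div_le_iff₀ (by positivity)]; linarith [mul_nonneg hc hElpos]
  have hηR : 0 ≤ η * R := mul_nonneg hη hR
  have hg0 : 0 ≤ 1 - m1 * (S + η * R) := by
    have h1 := (le_div_iff₀ hm1).mp hSR
    linarith
  have hg1 : 1 - m1 * (S + η * R) ≤ 1 := by linarith [mul_nonneg hm1.le (add_nonneg hS hηR)]
  have hh0 : 0 ≤ 1 - m2 * F := by
    have h1 := (le_div_iff₀ hm2).mp hFm
    linarith
  have hh1 : 1 - m2 * F ≤ 1 := by linarith [mul_nonneg hm2.le hF]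
  set T1 := k1 * E / (a1 + E)
  set T2 := c * a2 ^ l / (a2 ^ l + E ^ l)
  set T3 := c * a3 ^ l / (a3 ^ l + E ^ l)
  set g := 1 - m1 * (S + η * R)
  set h := 1 - m2 * F
  have hub : α * (S + R) * F ≤ (α / m2) * (S + R) := by
    have hαSR : 0 ≤ α * (S + R) := mul_nonneg hα (by linarith)
    have := mul_le_mul_of_nonneg_left hFm hαSR
    calc α * (S + R) * F ≤ α * (S + R) * (1 / m2) := this
      _ = (α / m2) * (S + R) := by ring
  have hαSR : 0 ≤ α * (S + R) := mul_nonneg hα (by linarith)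
  clear_value K T1 T2 T3 g h
  -- component bounds
  have hcS : 0 ≤ c * S := mul_nonneg hc hS
  have hf1 : |T1 * S * g - T2 * S - T3 * S| ≤ (k1 + 2 * c) * S := by
    rw [abs_le]
    constructor
    · linarith [mul_le_mul_of_nonneg_right ht2' hS, mul_le_mul_of_nonneg_right ht3' hS,
        mul_nonneg (mul_nonneg ht1 hS) hg0, mul_nonneg hk1 hS]
    · have hT1g : T1 * g ≤ k1 := le_trans (mul_le_of_le_one_right ht1 hg1) ht1'
      have h1 : T1 * g * S ≤ k1 * S := mul_le_mul_of_nonneg_right hT1g hS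
      have h2 : T1 * S * g = T1 * g * S := by ring
      linarith [mul_nonneg ht2 hS, mul_nonneg ht3 hS]
  have hf2 : |k3 * R * g + T3 * S| ≤ k3 * R + c * S := by
    rw [abs_le]
    constructor
    · linarith [mul_nonneg (mul_nonneg hk3 hR) hg0, mul_nonneg ht3 hS, mul_nonneg hk3 hR]
    · have hk3g : k3 * g ≤ k3 := mul_le_of_le_one_right hk3 hg1
      have h1 : k3 * g * R ≤ k3 * R := mul_le_mul_of_nonneg_right hk3g hR
      have h2 : k3 * R * g = k3 * g * R := by ring
      linarith [mul_le_mul_of_nonneg_right ht3' hS]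
  have hf3 : |(1 - u) * r * F - μ * E| ≤ r * F + μ * E := by
    rw [abs_le]
    constructor
    · linarith [mul_nonneg (mul_nonneg (show (0:ℝ) ≤ 1 - u by linarith) hr) hF,
        mul_nonneg hμ hE, mul_nonneg hr hF]
    · have h1 : (1 - u) * r ≤ r := mul_le_of_le_one_left hr (by linarith)
      have h2 : (1 - u) * r * F ≤ r * F := mul_le_mul_of_nonneg_right h1 hF
      linarith [mul_nonneg hμ hE]
  have hf4 : |k2 * F * h - α * (S + R) * F| ≤ k2 * F + (α / m2) * (S + R) := by
    have hdSR : 0 ≤ (α / m2) * (S + R) := mul_nonneg hd (by linarith)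
    have hk2F : 0 ≤ k2 * F := mul_nonneg hk2 hF
    rw [abs_le]
    constructor
    · have hk2h : 0 ≤ k2 * F * h := mul_nonneg hk2F hh0
      linarith
    · have hk2h : k2 * F * h ≤ k2 * F := mul_le_of_le_one_right hk2F hh1
      linarith [mul_nonneg hαSR hF]
  -- each coordinate is bounded by the norm
  set A := Real.sqrt (S ^ 2 + R ^ 2 + E ^ 2 + F ^ 2) with hA
  clear_value A
  have hSA : S ≤ A := by
    rw [hA]
    have := Real.sqrt_le_sqrt (show S ^ 2 ≤ S ^ 2 + R ^ 2 + E ^ 2 + F ^ 2 by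
      linarith [sq_nonneg R, sq_nonneg E, sq_nonneg F])
    rwa [Real.sqrt_sq hS] at this
  have hRA : R ≤ A := by
    rw [hA]
    have := Real.sqrt_le_sqrt (show R ^ 2 ≤ S ^ 2 + R ^ 2 + E ^ 2 + F ^ 2 by
      linarith [sq_nonneg S, sq_nonneg E, sq_nonneg F])
    rwa [Real.sqrt_sq hR] at this
  have hEA : E ≤ A := by
    rw [hA]
    have := Real.sqrt_le_sqrt (show E ^ 2 ≤ S ^ 2 + R ^ 2 + E ^ 2 + F ^ 2 by
      linarith [sq_nonneg S, sq_nonneg R, sq_nonneg F])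
    rwa [Real.sqrt_sq hE] at this
  have hFA : F ≤ A := by
    rw [hA]
    have := Real.sqrt_le_sqrt (show F ^ 2 ≤ S ^ 2 + R ^ 2 + E ^ 2 + F ^ 2 by
      linarith [sq_nonneg S, sq_nonneg R, sq_nonneg E])
    rwa [Real.sqrt_sq hF] at this
  have hsum : (k1 + 2 * c) * S + (k3 * R + c * S) + (r * F + μ * E)
      + (k2 * F + (α / m2) * (S + R)) ≤ K * (S + R + E + F) := by
    have h1 : (k1 + 3 * c + α / m2) * S ≤ K * S :=
      mul_le_mul_of_nonneg_right (by rw [hK]; linarith) hS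
    have h2 : (k3 + α / m2) * R ≤ K * R :=
      mul_le_mul_of_nonneg_right (by rw [hK]; linarith) hR
    have h3 : μ * E ≤ K * E :=
      mul_le_mul_of_nonneg_right (by rw [hK]; linarith) hE
    have h4 : (r + k2) * F ≤ K * F :=
      mul_le_mul_of_nonneg_right (by rw [hK]; linarith) hF
    linarith
  have hmain := sqrt_le_abs4 (T1 * S * g - T2 * S - T3 * S)
    (k3 * R * g + T3 * S) ((1 - u) * r * F - μ * E) (k2 * F * h - α * (S + R) * F)
  have hfinal : K * (S + R + E + F) ≤ 4 * K * (A + |u|) := by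
    have h4 : S + R + E + F ≤ 4 * A := by linarith
    have h5 := mul_le_mul_of_nonneg_left h4 hKpos.le
    have h6 : 0 ≤ K * |u| := mul_nonneg hKpos.le (abs_nonneg u)
    linarith
  calc Real.sqrt _ ≤ _ := hmain
    _ ≤ K * (S + R + E + F) := by linarith [hf1, hf2, hf3, hf4, hsum]
    _ ≤ 4 * K * (A + |u|) := hfinal
end
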